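/- Consider h_sgn(x) = (π²/4)·((1+σ²)/C(Λ))·h₁(1/√x)^{-2} + (1/C(Λ))·(C₃(Λ)/C₂(Λ))·(1 − 2h₂(1/√x)/h₁(1/√x)). If x ≥ 100, then (π²/8)·((1+σ²)/C(Λ))·x + 20(1+σ²)/C(Λ) ≤ h_sgn(x) ≤ (π²/2)·((1+σ²)/C(Λ))·x + 20(1+σ²)/C(Λ). -/

import Mathlib

open MeasureTheory ProbabilityTheory

/-- `φ(x) = ∫₀ˣ e^{-t²/2} dt`. -/
noncomputable def phi (x : ℝ) : ℝ := ∫ t in (0 : ℝ)..x, Real.exp (-t ^ 2 / 2)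

/-- `C₂ = E[W²/(c+W²)²]`, `W ~ N(0,1)`. -/
noncomputable def C₂ (c : ℝ) : ℝ := ∫ w, w ^ 2 / (c + w ^ 2) ^ 2 ∂(gaussianReal 0 1)

/-- `C₃ = E[W⁴/(c+W²)²]`, `W ~ N(0,1)`. -/
noncomputable def C₃ (c : ℝ) : ℝ := ∫ w, w ^ 4 / (c + w ^ 2) ^ 2 ∂(gaussianReal 0 1)

/-- `h₁(u) = Λ · E[|W| φ(u|W|)/(c + W²)]`, `W ~ N(0,1)`. -/
noncomputable def h₁ (Λ c u : ℝ) : ℝ :=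
  Λ * ∫ w, |w| * phi (u * |w|) / (c + w ^ 2) ∂(gaussianReal 0 1)

/-- `h₂(u) = C₃⁻¹ · E[|W|³ φ(u|W|)/(c+W²)²]`, `W ~ N(0,1)`. -/
noncomputable def h₂ (c u : ℝ) : ℝ :=
  (C₃ c)⁻¹ * ∫ w, |w| ^ 3 * phi (u * |w|) / (c + w ^ 2) ^ 2 ∂(gaussianReal 0 1)

/-- `h_sgn(x) = (π²/4)·((1+σ²)/c)·h₁(1/√x)⁻² + (1/c)·(C₃/C₂)·(1 − 2h₂(1/√x)/h₁(1/√x))`. -/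
noncomputable def hsgn (Λ c σ x : ℝ) : ℝ :=
  Real.pi ^ 2 / 4 * ((1 + σ ^ 2) / c) / (h₁ Λ c (1 / Real.sqrt x)) ^ 2 +
    1 / c * (C₃ c / C₂ c) * (1 - 2 * h₂ c (1 / Real.sqrt x) / h₁ Λ c (1 / Real.sqrt x))

/-!
Put `u = 1/√x ≤ 1/10`. Since `t - t³/6 ≤ φ(t) ≤ t`, both `h₁(u)` and `h₂(u)` equal `u` up to an
error `O(u³)`, whose constant is controlled by the Gaussian moments `E W⁴ = 3`, `E W⁶ = 15` and by
three Cauchy–Schwarz consequences of the fixed-point equation `1/Λ = E[W²/(C+W²)]`: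
`Λ ≤ C + 3 ≤ 2C` and `C₂, C₃ ≥ Λ⁻²`. Hence `3u/4 ≤ h₁ ≤ u`, `u/2 ≤ h₂ ≤ u` and `C₃/C₂ ≤ 12`, so
the first term of `h_sgn` lies between `(π²/4)((1+σ²)/C)x` and twice that, and the second one
lies in `[-20/C, 0]`.
-/

section GaussianMoments

lemma integrable_pow_gaussianReal (k : ℕ) :
    Integrable (fun w : ℝ => w ^ k) (gaussianReal 0 1) := by
  refine (memLp_id_gaussianReal' (k : ENNReal) (by simp)).integrable_norm_pow'.mono'
    (by fun_prop) (ae_of_all _ fun w => ?_)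
  simp

lemma integrable_gaussianReal_iff_integrable_pdf_mul {g : ℝ → ℝ} :
    Integrable g (gaussianReal 0 1) ↔ Integrable (fun x => gaussianPDFReal 0 1 x * g x) := by
  rw [gaussianReal_of_var_ne_zero _ one_ne_zero, integrable_withDensity_iff_integrable_smul'
    (measurable_gaussianPDF _ _) (ae_of_all _ fun _ => gaussianPDF_lt_top)]
  simp

lemma gaussianPDFReal_zero_one :
    gaussianPDFReal 0 1 = fun x => (√(2 * Real.pi))⁻¹ * Real.exp (-x ^ 2 / 2) := by
  simp [gaussianPDFReal_def]

lemma hasDerivAt_gaussianPDFReal_zero_one (x : ℝ) :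
    HasDerivAt (gaussianPDFReal 0 1) (-(x * gaussianPDFReal 0 1 x)) x := by
  rw [gaussianPDFReal_zero_one]
  refine (((hasDerivAt_pow 2 x).fun_neg.div_const 2).exp.const_mul _).congr_deriv ?_
  ring

-- Gaussian integration by parts: the derivative of `x ^ (k + 1) * pdf x` integrates to zero.
lemma integral_pow_add_two_gaussianReal (k : ℕ) :
    ∫ w, w ^ (k + 2) ∂gaussianReal 0 1 = (k + 1) * ∫ w, w ^ k ∂gaussianReal 0 1 := by
  have hint : ∀ n : ℕ, Integrable (fun x => gaussianPDFReal 0 1 x * x ^ n) :=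
    fun n => integrable_gaussianReal_iff_integrable_pdf_mul.mp (integrable_pow_gaussianReal n)
  have hderiv : ∀ x, HasDerivAt (fun y => y ^ (k + 1) * gaussianPDFReal 0 1 y)
      ((k + 1) * (gaussianPDFReal 0 1 x * x ^ k) - gaussianPDFReal 0 1 x * x ^ (k + 2)) x := by
    intro x
    refine ((hasDerivAt_pow (k + 1) x).fun_mul
      (hasDerivAt_gaussianPDFReal_zero_one x)).congr_deriv ?_
    push_cast; ring
  have h := integral_eq_zero_of_hasDerivAt_of_integrable hderiv
    (((hint k).const_mul _).sub (hint (k + 2))) (by simpa [mul_comm] using hint (k + 1))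
  rw [integral_sub ((hint k).const_mul _) (hint (k + 2)), integral_const_mul] at h
  simp only [integral_gaussianReal_eq_integral_smul one_ne_zero, smul_eq_mul]
  linarith

lemma integral_sq_gaussianReal : ∫ w, w ^ 2 ∂gaussianReal 0 1 = 1 := by
  simp [integral_pow_add_two_gaussianReal 0]

lemma integral_pow_four_gaussianReal : ∫ w, w ^ 4 ∂gaussianReal 0 1 = 3 := by
  rw [integral_pow_add_two_gaussianReal 2, integral_sq_gaussianReal]; norm_num

lemma integral_pow_six_gaussianReal : ∫ w, w ^ 6 ∂gaussianReal 0 1 = 15 := by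
  rw [integral_pow_add_two_gaussianReal 4, integral_pow_four_gaussianReal]; norm_num

end GaussianMoments

lemma sq_integral_mul_le_integral_sq_mul_integral_sq {α : Type*} [MeasurableSpace α]
    {μ : Measure α} {f g : α → ℝ} (hf : Integrable (fun x => f x ^ 2) μ)
    (hg : Integrable (fun x => g x ^ 2) μ) (hfg : Integrable (fun x => f x * g x) μ) :
    (∫ x, f x * g x ∂μ) ^ 2 ≤ (∫ x, f x ^ 2 ∂μ) * ∫ x, g x ^ 2 ∂μ := by
  have hquad : ∀ t : ℝ, 0 ≤ (∫ x, f x ^ 2 ∂μ) * (t * t) + (-2 * ∫ x, f x * g x ∂μ) * t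
      + ∫ x, g x ^ 2 ∂μ := by
    intro t
    have h1 := hf.const_mul (t * t)
    have h2 := hfg.const_mul (-2 * t)
    have hsq : (fun x => (t * f x - g x) ^ 2)
        = fun x => t * t * f x ^ 2 + -2 * t * (f x * g x) + g x ^ 2 := by
      ext x; ring
    have hexp := integral_nonneg (μ := μ) (f := fun x => (t * f x - g x) ^ 2)
      fun x => sq_nonneg _
    rw [hsq, integral_add (h1.fun_add h2) hg, integral_add h1 h2, integral_const_mul,
      integral_const_mul] at hexp
    linarith
  have h := discrim_le_zero hquad
  rw [discrim] at h
  linarith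

section Phi

lemma continuous_phi : Continuous phi :=
  intervalIntegral.continuous_primitive
    (fun _ _ => Continuous.intervalIntegrable (by fun_prop) _ _) 0

lemma phi_nonneg {t : ℝ} (ht : 0 ≤ t) : 0 ≤ phi t :=
  intervalIntegral.integral_nonneg ht fun _ _ => (Real.exp_pos _).le

lemma phi_le_self {t : ℝ} (ht : 0 ≤ t) : phi t ≤ t := by
  have h := intervalIntegral.integral_mono_on (μ := volume) ht
    ((by fun_prop : Continuous fun s : ℝ => Real.exp (-s ^ 2 / 2)).intervalIntegrable _ _)
    intervalIntegrable_const
    fun s _ => Real.exp_le_one_iff.mpr (by nlinarith [sq_nonneg s] : -s ^ 2 / 2 ≤ 0)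
  simpa [phi] using h

lemma sub_cube_div_six_le_phi {t : ℝ} (ht : 0 ≤ t) : t - t ^ 3 / 6 ≤ phi t := by
  have h := intervalIntegral.integral_mono_on (μ := volume) ht
    ((by fun_prop : Continuous fun s : ℝ => 1 - s ^ 2 / 2).intervalIntegrable _ _)
    ((by fun_prop : Continuous fun s : ℝ => Real.exp (-s ^ 2 / 2)).intervalIntegrable _ _)
    fun s _ => by linarith [Real.add_one_le_exp (-s ^ 2 / 2)]
  have hpoly : ∫ s in (0 : ℝ)..t, (1 - s ^ 2 / 2) = t - t ^ 3 / 6 := by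
    simp [intervalIntegral.integral_sub, intervalIntegral.integral_div, integral_pow]
    ring
  rwa [hpoly] at h

variable {u : ℝ}

lemma abs_mul_phi_le (hu : 0 ≤ u) (w : ℝ) : |w| * phi (u * |w|) ≤ u * w ^ 2 := by
  calc |w| * phi (u * |w|) ≤ |w| * (u * |w|) := by gcongr; exact phi_le_self (by positivity)
    _ = u * w ^ 2 := by rw [← sq_abs w]; ring

lemma le_abs_mul_phi (hu : 0 ≤ u) (w : ℝ) :
    u * w ^ 2 - u ^ 3 / 6 * w ^ 4 ≤ |w| * phi (u * |w|) := by
  calc u * w ^ 2 - u ^ 3 / 6 * w ^ 4 = |w| * (u * |w| - (u * |w|) ^ 3 / 6) := by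
        rw [← (Even.pow_abs (by decide) w : |w| ^ 4 = w ^ 4), ← sq_abs w]; ring
    _ ≤ |w| * phi (u * |w|) := by gcongr; exact sub_cube_div_six_le_phi (by positivity)

variable {μ : Measure ℝ} {ρ : ℝ → ℝ}
  (hu : 0 ≤ u) (hρ : ∀ w, 0 ≤ ρ w) (hρm : Measurable ρ)
  (h2 : Integrable (fun w => w ^ 2 * ρ w) μ)
include hu hρ hρm h2

lemma integrable_abs_mul_phi_mul : Integrable (fun w => |w| * phi (u * |w|) * ρ w) μ := by
  refine (h2.const_mul u).mono' ?_ (ae_of_all _ fun w => ?_)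
  · exact ((continuous_abs.mul (continuous_phi.comp (by fun_prop))).measurable.mul
      hρm).aestronglyMeasurable
  · rw [Real.norm_of_nonneg (mul_nonneg (mul_nonneg (abs_nonneg w)
      (phi_nonneg (by positivity))) (hρ w)), ← mul_assoc]
    exact mul_le_mul_of_nonneg_right (abs_mul_phi_le hu w) (hρ w)

lemma integral_abs_mul_phi_mul_le :
    ∫ w, |w| * phi (u * |w|) * ρ w ∂μ ≤ u * ∫ w, w ^ 2 * ρ w ∂μ := by
  rw [← integral_const_mul]
  refine integral_mono (integrable_abs_mul_phi_mul hu hρ hρm h2) (h2.const_mul u) fun w => ?_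
  rw [← mul_assoc]
  exact mul_le_mul_of_nonneg_right (abs_mul_phi_le hu w) (hρ w)

lemma le_integral_abs_mul_phi_mul (h4 : Integrable (fun w => w ^ 4 * ρ w) μ) :
    u * ∫ w, w ^ 2 * ρ w ∂μ - u ^ 3 / 6 * ∫ w, w ^ 4 * ρ w ∂μ
      ≤ ∫ w, |w| * phi (u * |w|) * ρ w ∂μ := by
  rw [← integral_const_mul, ← integral_const_mul,
    ← integral_sub (h2.const_mul u) (h4.const_mul _)]
  refine integral_mono ((h2.const_mul u).sub (h4.const_mul _))
    (integrable_abs_mul_phi_mul hu hρ hρm h2) fun w => ?_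
  calc u * (w ^ 2 * ρ w) - u ^ 3 / 6 * (w ^ 4 * ρ w)
      = (u * w ^ 2 - u ^ 3 / 6 * w ^ 4) * ρ w := by ring
    _ ≤ |w| * phi (u * |w|) * ρ w := mul_le_mul_of_nonneg_right (le_abs_mul_phi hu w) (hρ w)

end Phi

section Constants

variable {k : ℕ} {c : ℝ}

lemma pow_div_pow_le (hc : 0 < c) (hk : Even k) (m : ℕ) (w : ℝ) :
    w ^ k / (c + w ^ 2) ^ m ≤ w ^ k / c ^ m :=
  div_le_div_of_nonneg_left (hk.pow_nonneg w) (by positivity)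
    (pow_le_pow_left₀ hc.le (by nlinarith [sq_nonneg w]) m)

lemma integrable_pow_div_pow (hc : 0 < c) (hk : Even k) (m : ℕ) :
    Integrable (fun w : ℝ => w ^ k / (c + w ^ 2) ^ m) (gaussianReal 0 1) := by
  refine ((integrable_pow_gaussianReal k).div_const (c ^ m)).mono'
    (by fun_prop : Measurable _).aestronglyMeasurable (ae_of_all _ fun w => ?_)
  rw [Real.norm_of_nonneg (div_nonneg (hk.pow_nonneg w) (by positivity))]
  exact pow_div_pow_le hc hk m w

lemma integrable_pow_mul_sq_div_sq (hc : 0 < c) (hk : Even k) :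
    Integrable (fun w : ℝ => w ^ k * (w ^ 2 / (c + w ^ 2) ^ 2)) (gaussianReal 0 1) := by
  simpa [mul_div_assoc', ← pow_add] using integrable_pow_div_pow hc (hk.add even_two) 2

lemma integral_pow_div_pow_le (hc : 0 < c) (hk : Even k) (m : ℕ) :
    ∫ w, w ^ k / (c + w ^ 2) ^ m ∂gaussianReal 0 1
      ≤ (∫ w, w ^ k ∂gaussianReal 0 1) / c ^ m := by
  rw [← integral_div]
  exact integral_mono (integrable_pow_div_pow hc hk m)
    ((integrable_pow_gaussianReal k).div_const _) (pow_div_pow_le hc hk m)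

lemma C₃_le (hc : 0 < c) : C₃ c ≤ 3 / c ^ 2 := by
  simpa [C₃, integral_pow_four_gaussianReal] using
    integral_pow_div_pow_le hc (by decide : Even 4) 2

lemma sq_integral_sq_div_le_C₂ (hc : 0 < c) :
    (∫ w, w ^ 2 / (c + w ^ 2) ∂gaussianReal 0 1) ^ 2 ≤ C₂ c := by
  have h := sq_integral_mul_le_integral_sq_mul_integral_sq (μ := gaussianReal 0 1)
    (f := fun w => w) (g := fun w => w / (c + w ^ 2)) (integrable_pow_gaussianReal 2)
    (by simpa [div_pow] using integrable_pow_div_pow hc even_two 2)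
    (by simpa [← sq, mul_div_assoc'] using integrable_pow_div_pow hc even_two 1)
  simpa [C₂, integral_sq_gaussianReal, div_pow, ← sq, mul_div_assoc'] using h

lemma sq_integral_sq_div_le_C₃ (hc : 0 < c) :
    (∫ w, w ^ 2 / (c + w ^ 2) ∂gaussianReal 0 1) ^ 2 ≤ C₃ c := by
  have h := sq_integral_mul_le_integral_sq_mul_integral_sq (μ := gaussianReal 0 1)
    (f := fun _ => 1) (g := fun w => w ^ 2 / (c + w ^ 2)) (integrable_const _)
    (by simpa [div_pow, ← pow_mul] using integrable_pow_div_pow hc (by decide : Even 4) 2)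
    (by simpa using integrable_pow_div_pow hc even_two 1)
  simpa [C₃, div_pow, ← pow_mul] using h

lemma one_le_integral_sq_div_mul (hc : 0 < c) :
    1 ≤ (∫ w, w ^ 2 / (c + w ^ 2) ∂gaussianReal 0 1) * (c + 3) := by
  have hs : ∀ w : ℝ, 0 < c + w ^ 2 := fun w => by positivity
  have hfg : ∀ w, w / √(c + w ^ 2) * (w * √(c + w ^ 2)) = w ^ 2 := fun w => by
    field_simp [(Real.sqrt_pos.mpr (hs w)).ne']
  have hf : ∀ w, (w / √(c + w ^ 2)) ^ 2 = w ^ 2 / (c + w ^ 2) := fun w => by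
    rw [div_pow, Real.sq_sqrt (hs w).le]
  have hg : ∀ w, (w * √(c + w ^ 2)) ^ 2 = c * w ^ 2 + w ^ 4 := fun w => by
    rw [mul_pow, Real.sq_sqrt (hs w).le]; ring
  have hc2 := (integrable_pow_gaussianReal 2).const_mul c
  have h := sq_integral_mul_le_integral_sq_mul_integral_sq (μ := gaussianReal 0 1)
    (f := fun w => w / √(c + w ^ 2)) (g := fun w => w * √(c + w ^ 2))
    (by simpa only [hf, pow_one] using integrable_pow_div_pow hc even_two 1)
    (by simpa only [hg] using hc2.fun_add (integrable_pow_gaussianReal 4))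
    (by simpa only [hfg] using integrable_pow_gaussianReal 2)
  simp only [hfg, hf, hg, integral_sq_gaussianReal, one_pow] at h
  rw [integral_add hc2 (integrable_pow_gaussianReal 4), integral_const_mul,
    integral_sq_gaussianReal, integral_pow_four_gaussianReal] at h
  linarith

end Constants

section Estimates

variable {Λ c u : ℝ}

lemma lambda_le_two_mul (hΛ : 10 ≤ Λ) (hc : 0 < c)
    (hfix : 1 / Λ = ∫ w, w ^ 2 / (c + w ^ 2) ∂gaussianReal 0 1) : Λ ≤ 2 * c := by
  have h := one_le_integral_sq_div_mul hc
  rw [← hfix, one_div_mul_eq_div, one_le_div (by linarith)] at h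
  linarith

lemma inv_sq_le_C₂ (hc : 0 < c) (hfix : 1 / Λ = ∫ w, w ^ 2 / (c + w ^ 2) ∂gaussianReal 0 1) :
    1 / Λ ^ 2 ≤ C₂ c := by
  simpa [← hfix] using sq_integral_sq_div_le_C₂ hc

lemma inv_sq_le_C₃ (hc : 0 < c) (hfix : 1 / Λ = ∫ w, w ^ 2 / (c + w ^ 2) ∂gaussianReal 0 1) :
    1 / Λ ^ 2 ≤ C₃ c := by
  simpa [← hfix] using sq_integral_sq_div_le_C₃ hc

lemma C₃_div_C₂_le (hΛ : 10 ≤ Λ) (hc : 0 < c)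
    (hfix : 1 / Λ = ∫ w, w ^ 2 / (c + w ^ 2) ∂gaussianReal 0 1) : C₃ c / C₂ c ≤ 12 := by
  have hΛc := lambda_le_two_mul hΛ hc hfix
  have hC₂ := inv_sq_le_C₂ hc hfix
  have hΛ2 : 1 / (4 * c ^ 2) ≤ 1 / Λ ^ 2 :=
    one_div_le_one_div_of_le (by positivity) (by nlinarith)
  rw [div_le_iff₀ (by linarith [show 0 < 1 / (4 * c ^ 2) by positivity])]
  calc C₃ c ≤ 3 / c ^ 2 := C₃_le hc
    _ = 12 * (1 / (4 * c ^ 2)) := by field_simp; ring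
    _ ≤ 12 * C₂ c := by linarith

lemma h₁_le (hΛ : 0 < Λ) (hc : 0 < c) (hu : 0 ≤ u)
    (hfix : 1 / Λ = ∫ w, w ^ 2 / (c + w ^ 2) ∂gaussianReal 0 1) : h₁ Λ c u ≤ u := by
  have h := integral_abs_mul_phi_mul_le (μ := gaussianReal 0 1) (ρ := fun w => (c + w ^ 2)⁻¹)
    hu (fun w => by positivity) (by fun_prop)
    (by simpa [div_eq_mul_inv] using integrable_pow_div_pow hc even_two 1)
  simp only [← div_eq_mul_inv, ← hfix] at h
  calc h₁ Λ c u ≤ Λ * (u * (1 / Λ)) := mul_le_mul_of_nonneg_left h hΛ.le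
    _ = u := by field_simp

lemma sub_le_h₁ (hΛ : 0 < Λ) (hc : 0 < c) (hu : 0 ≤ u)
    (hfix : 1 / Λ = ∫ w, w ^ 2 / (c + w ^ 2) ∂gaussianReal 0 1) :
    u - Λ / (2 * c) * u ^ 3 ≤ h₁ Λ c u := by
  have h := le_integral_abs_mul_phi_mul (μ := gaussianReal 0 1) (ρ := fun w => (c + w ^ 2)⁻¹)
    hu (fun w => by positivity) (by fun_prop)
    (by simpa [div_eq_mul_inv] using integrable_pow_div_pow hc even_two 1)
    (by simpa [div_eq_mul_inv] using integrable_pow_div_pow hc (by decide : Even 4) 1)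
  simp only [← div_eq_mul_inv, ← hfix] at h
  have hE₄ : ∫ w, w ^ 4 / (c + w ^ 2) ∂gaussianReal 0 1 ≤ 3 / c := by
    simpa [integral_pow_four_gaussianReal] using
      integral_pow_div_pow_le hc (by decide : Even 4) 1
  calc u - Λ / (2 * c) * u ^ 3 = Λ * (u * (1 / Λ) - u ^ 3 / 6 * (3 / c)) := by
        field_simp; ring
    _ ≤ Λ * (u * (1 / Λ) - u ^ 3 / 6 * ∫ w, w ^ 4 / (c + w ^ 2) ∂gaussianReal 0 1) := by
      gcongr
    _ ≤ h₁ Λ c u := mul_le_mul_of_nonneg_left h hΛ.le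

lemma h₂_eq : h₂ c u = (C₃ c)⁻¹ *
    ∫ w, |w| * phi (u * |w|) * (w ^ 2 / (c + w ^ 2) ^ 2) ∂gaussianReal 0 1 := by
  rw [h₂]
  congr 2; ext w
  rw [← sq_abs w]; ring

lemma integral_sq_mul_sq_div_sq :
    ∫ w, w ^ 2 * (w ^ 2 / (c + w ^ 2) ^ 2) ∂gaussianReal 0 1 = C₃ c := by
  rw [C₃]; congr 1; ext w; ring

lemma h₂_le (hc : 0 < c) (hu : 0 ≤ u) (hC₃ : 0 < C₃ c) : h₂ c u ≤ u := by
  have h := integral_abs_mul_phi_mul_le (μ := gaussianReal 0 1)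
    (ρ := fun w => w ^ 2 / (c + w ^ 2) ^ 2) hu (fun w => by positivity) (by fun_prop)
    (integrable_pow_mul_sq_div_sq hc even_two)
  rw [integral_sq_mul_sq_div_sq] at h
  rw [h₂_eq]
  calc (C₃ c)⁻¹ * ∫ w, |w| * phi (u * |w|) * (w ^ 2 / (c + w ^ 2) ^ 2) ∂gaussianReal 0 1
      ≤ (C₃ c)⁻¹ * (u * C₃ c) := by gcongr
    _ = u := by field_simp

lemma sub_le_h₂ (hc : 0 < c) (hu : 0 ≤ u) (hC₃ : 0 < C₃ c) :
    u - 5 / (2 * c ^ 2 * C₃ c) * u ^ 3 ≤ h₂ c u := by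
  have h := le_integral_abs_mul_phi_mul (μ := gaussianReal 0 1)
    (ρ := fun w => w ^ 2 / (c + w ^ 2) ^ 2) hu (fun w => by positivity) (by fun_prop)
    (integrable_pow_mul_sq_div_sq hc even_two)
    (integrable_pow_mul_sq_div_sq hc (by decide : Even 4))
  rw [integral_sq_mul_sq_div_sq, show ∫ w, w ^ 4 * (w ^ 2 / (c + w ^ 2) ^ 2) ∂gaussianReal 0 1
      = ∫ w, w ^ 6 / (c + w ^ 2) ^ 2 ∂gaussianReal 0 1 by congr 1; ext w; ring] at h
  have hE₆ : ∫ w, w ^ 6 / (c + w ^ 2) ^ 2 ∂gaussianReal 0 1 ≤ 15 / c ^ 2 := by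
    simpa [integral_pow_six_gaussianReal] using
      integral_pow_div_pow_le hc (by decide : Even 6) 2
  rw [h₂_eq]
  calc u - 5 / (2 * c ^ 2 * C₃ c) * u ^ 3
      = (C₃ c)⁻¹ * (u * C₃ c - u ^ 3 / 6 * (15 / c ^ 2)) := by field_simp; ring
    _ ≤ (C₃ c)⁻¹ * (u * C₃ c - u ^ 3 / 6 * ∫ w, w ^ 6 / (c + w ^ 2) ^ 2 ∂gaussianReal 0 1) := by
      gcongr
    _ ≤ _ := by gcongr

lemma three_quarters_mul_le_h₁ (hΛ : 10 ≤ Λ) (hc : 0 < c)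
    (hfix : 1 / Λ = ∫ w, w ^ 2 / (c + w ^ 2) ∂gaussianReal 0 1) (hu : 0 ≤ u)
    (hu2 : u ^ 2 ≤ 1 / 100) : 3 / 4 * u ≤ h₁ Λ c u := by
  have h := sub_le_h₁ (by linarith) hc hu hfix
  have hΛc : Λ / (2 * c) ≤ 1 := by
    rw [div_le_one (by positivity)]; exact lambda_le_two_mul hΛ hc hfix
  nlinarith [mul_le_mul_of_nonneg_right hΛc (pow_nonneg hu 3)]

lemma half_le_h₂ (hΛ : 10 ≤ Λ) (hc : 0 < c)
    (hfix : 1 / Λ = ∫ w, w ^ 2 / (c + w ^ 2) ∂gaussianReal 0 1) (hu : 0 ≤ u)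
    (hu2 : u ^ 2 ≤ 1 / 100) : u / 2 ≤ h₂ c u := by
  have hΛc := lambda_le_two_mul hΛ hc hfix
  have hC₃ := inv_sq_le_C₃ hc hfix
  have h := sub_le_h₂ hc hu (lt_of_lt_of_le (by positivity) hC₃)
  have hk : 5 / (2 * c ^ 2 * C₃ c) ≤ 10 := by
    have h4 : 1 / (4 * c ^ 2) ≤ C₃ c :=
      (one_div_le_one_div_of_le (by positivity) (by nlinarith)).trans hC₃
    have : 1 / 2 ≤ 2 * c ^ 2 * C₃ c := by
      rw [div_le_iff₀ (by positivity)] at h4; nlinarith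
    rw [div_le_iff₀ (by linarith)]; linarith
  nlinarith [mul_le_mul_of_nonneg_right hk (pow_nonneg hu 3)]

end Estimates

lemma div_sq_mem_Icc {K a u x : ℝ} (hK : 0 ≤ K) (hu : 0 < u) (hux : u ^ 2 * x = 1)
    (ha : 3 / 4 * u ≤ a) (ha' : a ≤ u) : K / a ^ 2 ∈ Set.Icc (K * x) (2 * (K * x)) := by
  obtain rfl : x = 1 / u ^ 2 := by field_simp; linarith
  have ha0 : 0 < a := by linarith
  constructor
  · rw [mul_one_div]
    exact div_le_div_of_nonneg_left hK (by positivity) (pow_le_pow_left₀ ha0.le ha' 2)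
  · calc K / a ^ 2 ≤ K / (3 / 4 * u) ^ 2 :=
          div_le_div_of_nonneg_left hK (by positivity) (pow_le_pow_left₀ (by positivity) ha 2)
      _ ≤ 2 * (K * (1 / u ^ 2)) := by field_simp; nlinarith

lemma mul_one_sub_two_mul_div_mem_Icc {r a b u : ℝ} (hr : 0 ≤ r) (hr' : r ≤ 12) (hu : 0 < u)
    (ha : 3 / 4 * u ≤ a) (ha' : a ≤ u) (hb : u / 2 ≤ b) (hb' : b ≤ u) :
    r * (1 - 2 * b / a) ∈ Set.Icc (-20) 0 := by
  have ha0 : 0 < a := by linarith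
  have ht : -(5 / 3) ≤ 1 - 2 * b / a := by
    rw [le_sub_comm, div_le_iff₀ ha0]; linarith
  have ht' : 1 - 2 * b / a ≤ 0 := by
    rw [sub_nonpos, le_div_iff₀ ha0]; linarith
  exact ⟨by linarith [mul_le_mul_of_nonneg_left ht hr], mul_nonpos_of_nonneg_of_nonpos hr ht'⟩

lemma hsgn_bounds_of_terms {c σ x T r t : ℝ} (hc : 0 < c) (hx : 100 ≤ x)
    (hT : Real.pi ^ 2 / 4 * ((1 + σ ^ 2) / c) * x ≤ T)
    (hT' : T ≤ 2 * (Real.pi ^ 2 / 4 * ((1 + σ ^ 2) / c) * x))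
    (hrt : -20 ≤ r * t) (hrt' : r * t ≤ 0) :
    Real.pi ^ 2 / 8 * ((1 + σ ^ 2) / c) * x + 20 * (1 + σ ^ 2) / c ≤ T + 1 / c * r * t ∧
      T + 1 / c * r * t ≤ Real.pi ^ 2 / 2 * ((1 + σ ^ 2) / c) * x + 20 * (1 + σ ^ 2) / c := by
  have hc' : 0 ≤ 1 / c := by positivity
  have hS : 1 / c ≤ (1 + σ ^ 2) / c := by gcongr; nlinarith
  have hS0 : 0 ≤ (1 + σ ^ 2) / c := by positivity
  have hSx : 900 * ((1 + σ ^ 2) / c) ≤ Real.pi ^ 2 * ((1 + σ ^ 2) / c) * x := by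
    have hπ : 9 ≤ Real.pi ^ 2 := by nlinarith [Real.pi_gt_three]
    have := mul_le_mul hπ hx (by norm_num) (by positivity)
    nlinarith
  have hrtc := mul_le_mul_of_nonneg_left hrt hc'
  have hrtc' := mul_le_mul_of_nonneg_left hrt' hc'
  rw [mul_assoc (1 / c)]
  constructor
  · linear_combination hT + hrtc + hSx / 8 + 20 * hS + 145 / 2 * hS0
  · linear_combination hT' + hrtc' + 20 * hS0

theorem statement17_general (Λ c σ : ℝ) (hΛ : 10 ≤ Λ) (hc : 0 < c)
    (hfix : 1 / Λ = ∫ w, w ^ 2 / (c + w ^ 2) ∂(gaussianReal 0 1))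
    (x : ℝ) (hx : 100 ≤ x) :
    Real.pi ^ 2 / 8 * ((1 + σ ^ 2) / c) * x + 20 * (1 + σ ^ 2) / c ≤ hsgn Λ c σ x ∧
      hsgn Λ c σ x ≤ Real.pi ^ 2 / 2 * ((1 + σ ^ 2) / c) * x + 20 * (1 + σ ^ 2) / c := by
  have hC₂ : 0 < C₂ c := lt_of_lt_of_le (by positivity) (inv_sq_le_C₂ hc hfix)
  have hC₃ : 0 < C₃ c := lt_of_lt_of_le (by positivity) (inv_sq_le_C₃ hc hfix)
  unfold hsgn
  set u := 1 / √x
  have hu : 0 < u := by positivity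
  have hux : u ^ 2 * x = 1 := by
    simp only [u, div_pow, Real.sq_sqrt (by linarith : (0 : ℝ) ≤ x)]; field_simp
  have hu2 : u ^ 2 ≤ 1 / 100 := by nlinarith
  have hh₁ := three_quarters_mul_le_h₁ hΛ hc hfix hu.le hu2
  have hh₁' := h₁_le (by linarith) hc hu.le hfix
  obtain ⟨hT, hT'⟩ := div_sq_mem_Icc (K := Real.pi ^ 2 / 4 * ((1 + σ ^ 2) / c))
    (by positivity) hu hux hh₁ hh₁'
  obtain ⟨hrt, hrt'⟩ := mul_one_sub_two_mul_div_mem_Icc (div_nonneg hC₃.le hC₂.le)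
    (C₃_div_C₂_le hΛ hc hfix) hu hh₁ hh₁' (half_le_h₂ hΛ hc hfix hu.le hu2) (h₂_le hc hu.le hC₃)
  exact hsgn_bounds_of_terms hc hx hT hT' hrt hrt'

/-- If `x ≥ 100` then
`(π²/8)·((1+σ²)/c)·x + 20(1+σ²)/c ≤ h_sgn(x) ≤ (π²/2)·((1+σ²)/c)·x + 20(1+σ²)/c`,
where `c = C(Λ)` solves `1/Λ = E[W²/(c+W²)]` and `Λ ≥ 10`. -/
theorem statement17 (Λ c σ : ℝ) (hΛ : 10 ≤ Λ) (hc : 0 < c) (hσ : 0 ≤ σ)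
    (hfix : 1 / Λ = ∫ w, w ^ 2 / (c + w ^ 2) ∂(gaussianReal 0 1))
    (x : ℝ) (hx : 100 ≤ x) :
    Real.pi ^ 2 / 8 * ((1 + σ ^ 2) / c) * x + 20 * (1 + σ ^ 2) / c ≤ hsgn Λ c σ x ∧
      hsgn Λ c σ x ≤ Real.pi ^ 2 / 2 * ((1 + σ ^ 2) / c) * x + 20 * (1 + σ ^ 2) / c :=
  statement17_general Λ c σ hΛ hc hfix x hx
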